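/- Let z ≠ 0 and let f : ℝ → ℝ be continuously differentiable with compact support. Then Var[f(V)] = ∫_ℝ ∫_ℝ f'(x) f'(y) (Φ_z(min(x,y)) − Φ_z(x)Φ_z(y)) dx dy, where V ~ N(0, z²) and Φ_z is the distribution function of N(0, z²). -/

import Mathlib

open MeasureTheory ProbabilityTheory

/-- The distribution function of `N(0, z²)`. -/
noncomputable def gaussCDF (z x : ℝ) : ℝ :=
  ((gaussianReal 0 (z ^ 2).toNNReal) (Set.Iic x)).toReal

/-!
Hoeffding's covariance identity. Let `μ` be a probability measure on `ℝ` with distribution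
function `F`. Writing `f v = ∫ f'(x) 𝟙{x < v} dx` and centring,
`f v - c = ∫ f'(x) (𝟙{x < v} - μ(x, ∞)) dx` for a constant `c`, which Fubini identifies
with the mean of `f`. Squaring and integrating against `μ` (Fubini again: the kernel is
bounded and `f'` is integrable) gives
`Var f = ∫∫ f'(x) f'(y) Cov(𝟙{V > x}, 𝟙{V > y}) dx dy`, and that covariance is
`μ(max x y, ∞) - μ(x, ∞) μ(y, ∞) = F (min x y) - F x F y`.
Strict indicators make the tails `1 - F`, so no continuity of `F` is needed.
-/

open Set Function

section KernelTransform

variable {α β : Type*} [MeasurableSpace α] [MeasurableSpace β] {μ : Measure α} {ν : Measure β}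
  [IsFiniteMeasure μ] {φ : β → ℝ} {e : β → α → ℝ} {C : ℝ}

lemma integrable_prod_mul_kernel (hφ : Integrable φ ν) (he : Measurable (uncurry e))
    (hC : ∀ x v, ‖e x v‖ ≤ C) :
    Integrable (fun q : α × β => φ q.2 * e q.2 q.1) (μ.prod ν) := by
  refine ((integrable_const C).mul_prod hφ.norm).mono' ?_ (ae_of_all _ fun q => ?_)
  · exact hφ.1.comp_snd.mul (he.comp measurable_swap).aestronglyMeasurable
  · rw [norm_mul, mul_comm]
    exact mul_le_mul_of_nonneg_right (hC _ _) (norm_nonneg _)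

lemma integrable_mul_kernel (hφ : Integrable φ ν) (he : Measurable (uncurry e))
    (hC : ∀ x v, ‖e x v‖ ≤ C) (v : α) : Integrable (fun x => φ x * e x v) ν :=
  hφ.mul_bdd (he.comp (measurable_id.prodMk measurable_const)).aestronglyMeasurable
    (ae_of_all _ fun x => hC x v)

lemma integral_integral_mul_kernel_swap [SFinite ν] (hφ : Integrable φ ν)
    (he : Measurable (uncurry e)) (hC : ∀ x v, ‖e x v‖ ≤ C) :
    ∫ v, ∫ x, φ x * e x v ∂ν ∂μ = ∫ x, φ x * ∫ v, e x v ∂μ ∂ν := by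
  simp_rw [← integral_const_mul]
  exact integral_integral_swap (integrable_prod_mul_kernel hφ he hC)

lemma integral_sq_integral_mul_kernel [SFinite ν] (hφ : Integrable φ ν)
    (he : Measurable (uncurry e)) (hC : ∀ x v, ‖e x v‖ ≤ C) :
    ∫ v, (∫ x, φ x * e x v ∂ν) ^ 2 ∂μ
      = ∫ x, ∫ y, φ x * φ y * ∫ v, e x v * e y v ∂μ ∂ν ∂ν := by
  have hprod : Integrable (fun q : α × β × β => φ q.2.1 * e q.2.1 q.1 * (φ q.2.2 * e q.2.2 q.1))
      (μ.prod (ν.prod ν)) := by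
    have hφφ : AEStronglyMeasurable (fun p : β × β => φ p.1 * φ p.2) (ν.prod ν) :=
      hφ.1.comp_fst.mul hφ.1.comp_snd
    refine ((integrable_const (C * C)).mul_prod (hφ.norm.mul_prod hφ.norm)).mono' ?_
      (ae_of_all _ fun q => ?_)
    · have hee : Measurable fun q : α × β × β => e q.2.1 q.1 * e q.2.2 q.1 :=
        (he.comp (measurable_snd.fst.prodMk measurable_fst)).mul
          (he.comp (measurable_snd.snd.prodMk measurable_fst))
      refine (hφφ.comp_snd.mul hee.aestronglyMeasurable).congr (ae_of_all _ fun q => ?_)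
      simp only [Pi.mul_apply]
      ring
    · have hC0 : 0 ≤ C := (norm_nonneg _).trans (hC q.2.1 q.1)
      calc ‖φ q.2.1 * e q.2.1 q.1 * (φ q.2.2 * e q.2.2 q.1)‖
          = ‖φ q.2.1‖ * ‖e q.2.1 q.1‖ * (‖φ q.2.2‖ * ‖e q.2.2 q.1‖) := by simp only [norm_mul]
        _ ≤ ‖φ q.2.1‖ * C * (‖φ q.2.2‖ * C) := by
            gcongr <;> exact hC _ _
        _ = C * C * (‖φ q.2.1‖ * ‖φ q.2.2‖) := by ring
  have hpush : ∀ p : β × β, ∫ v, φ p.1 * e p.1 v * (φ p.2 * e p.2 v) ∂μ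
      = φ p.1 * φ p.2 * ∫ v, e p.1 v * e p.2 v ∂μ := fun p => by
    rw [← integral_const_mul]; congr 1 with v; ring
  calc ∫ v, (∫ x, φ x * e x v ∂ν) ^ 2 ∂μ
      = ∫ v, ∫ p, φ p.1 * e p.1 v * (φ p.2 * e p.2 v) ∂ν.prod ν ∂μ := by
        refine integral_congr_ae (ae_of_all _ fun v => (sq _).trans ?_)
        exact (integral_prod_mul (fun x => φ x * e x v) (fun x => φ x * e x v)).symm
    _ = ∫ p, ∫ v, φ p.1 * e p.1 v * (φ p.2 * e p.2 v) ∂μ ∂ν.prod ν :=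
        integral_integral_swap hprod
    _ = ∫ p, φ p.1 * φ p.2 * ∫ v, e p.1 v * e p.2 v ∂μ ∂ν.prod ν :=
        integral_congr_ae (ae_of_all _ hpush)
    _ = ∫ x, ∫ y, φ x * φ y * ∫ v, e x v * e y v ∂μ ∂ν ∂ν := by
        refine (integral_integral (f := fun x y => φ x * φ y * ∫ v, e x v * e y v ∂μ) ?_).symm
        exact hprod.integral_prod_right.congr (ae_of_all _ hpush)

end KernelTransform

lemma integral_centered_indicator_mul {Ω : Type*} [MeasurableSpace Ω] (μ : Measure Ω)
    [IsProbabilityMeasure μ] {s t : Set Ω} (hs : MeasurableSet s) (ht : MeasurableSet t) :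
    ∫ ω, (s.indicator 1 ω - μ.real s) * (t.indicator 1 ω - μ.real t) ∂μ
      = μ.real (s ∩ t) - μ.real s * μ.real t := by
  have hmem : ∀ {u : Set Ω}, MeasurableSet u → MemLp (u.indicator (1 : Ω → ℝ)) 2 μ :=
    fun hu => (memLp_const 1).indicator hu
  have hcov := covariance_eq_sub (hmem hs) (hmem ht)
  rw [← inter_indicator_one] at hcov
  simpa only [covariance, integral_indicator_one hs, integral_indicator_one ht,
    integral_indicator_one (hs.inter ht)] using hcov

lemma measureReal_Ioi_eq_one_sub_cdf (μ : Measure ℝ) [IsProbabilityMeasure μ] (x : ℝ) :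
    μ.real (Ioi x) = 1 - cdf μ x := by
  rw [cdf_eq_real, ← probReal_compl_eq_one_sub measurableSet_Iic, compl_Iic]

lemma integral_deriv_mul_indicator_Ioi {f : ℝ → ℝ} (hf : ContDiff ℝ 1 f)
    (hsupp : HasCompactSupport f) (v : ℝ) :
    ∫ x, deriv f x * (Ioi x).indicator 1 v = f v := by
  have hind : ∀ x, deriv f x * (Ioi x).indicator 1 v = (Iio v).indicator (deriv f) x :=
    fun x => by by_cases h : x < v <;> simp [h]
  simp_rw [hind]
  rw [integral_indicator measurableSet_Iio, ← integral_Iic_eq_integral_Iio,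
    hsupp.integral_Iic_deriv_eq hf v]

section CenteredIndicatorIoi

variable (μ : Measure ℝ)

noncomputable def centeredIndicatorIoi (x v : ℝ) : ℝ := (Ioi x).indicator 1 v - μ.real (Ioi x)

lemma antitone_measureReal_Ioi [IsFiniteMeasure μ] : Antitone fun x => μ.real (Ioi x) :=
  fun _ _ h => measureReal_mono (Ioi_subset_Ioi h)

lemma measurable_uncurry_centeredIndicatorIoi [IsFiniteMeasure μ] :
    Measurable (uncurry (centeredIndicatorIoi μ)) := by
  have hlt : MeasurableSet {p : ℝ × ℝ | p.1 < p.2} := measurableSet_lt measurable_fst measurable_snd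
  exact (measurable_const.indicator hlt).sub
    ((antitone_measureReal_Ioi μ).measurable.comp measurable_fst)

lemma norm_centeredIndicatorIoi_le_one [IsProbabilityMeasure μ] (x v : ℝ) :
    ‖centeredIndicatorIoi μ x v‖ ≤ 1 := by
  refine abs_sub_le_of_nonneg_of_le ?_ ?_ measureReal_nonneg measureReal_le_one
  · exact indicator_nonneg (fun _ _ => zero_le_one) v
  · exact indicator_apply_le' (fun _ => le_rfl) (fun _ => zero_le_one)

lemma integral_centeredIndicatorIoi [IsProbabilityMeasure μ] (x : ℝ) :
    ∫ v, centeredIndicatorIoi μ x v ∂μ = 0 := by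
  simp only [centeredIndicatorIoi]
  rw [integral_sub ((integrable_const 1).indicator measurableSet_Ioi) (integrable_const _),
    integral_indicator_one measurableSet_Ioi, integral_const, probReal_univ, one_smul, sub_self]

lemma integral_centeredIndicatorIoi_mul [IsProbabilityMeasure μ] (x y : ℝ) :
    ∫ v, centeredIndicatorIoi μ x v * centeredIndicatorIoi μ y v ∂μ
      = cdf μ (min x y) - cdf μ x * cdf μ y := by
  simp only [centeredIndicatorIoi]
  rw [integral_centered_indicator_mul μ measurableSet_Ioi measurableSet_Ioi, Ioi_inter_Ioi]
  simp only [measureReal_Ioi_eq_one_sub_cdf]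
  rcases le_total x y with h | h
  · rw [max_eq_right h, min_eq_left h]; ring
  · rw [max_eq_left h, min_eq_right h]; ring

end CenteredIndicatorIoi

theorem integral_sq_sub_sq_integral_eq_integral_integral_deriv_mul_cdf (μ : Measure ℝ)
    [IsProbabilityMeasure μ] {f : ℝ → ℝ} (hf : ContDiff ℝ 1 f) (hsupp : HasCompactSupport f) :
    ∫ v, f v ^ 2 ∂μ - (∫ v, f v ∂μ) ^ 2
      = ∫ x, ∫ y, deriv f x * deriv f y * (cdf μ (min x y) - cdf μ x * cdf μ y) := by
  have hφ : Integrable (deriv f) :=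
    (hf.continuous_deriv le_rfl).integrable_of_hasCompactSupport hsupp.deriv
  have he := measurable_uncurry_centeredIndicatorIoi μ
  have hC := norm_centeredIndicatorIoi_le_one μ
  set c := ∫ x, deriv f x * μ.real (Ioi x)
  have hcentered : ∀ v, f v - c = ∫ x, deriv f x * centeredIndicatorIoi μ x v := fun v => by
    have htail : Integrable (fun x => deriv f x * μ.real (Ioi x)) :=
      hφ.mul_bdd (antitone_measureReal_Ioi μ).measurable.aestronglyMeasurable
        (ae_of_all _ fun x =>
          (abs_of_nonneg measureReal_nonneg).trans_le (measureReal_le_one (μ := μ)))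
    rw [sub_eq_iff_eq_add, ← integral_add (integrable_mul_kernel hφ he hC v) htail,
      ← integral_deriv_mul_indicator_Ioi hf hsupp v]
    simp only [centeredIndicatorIoi, mul_sub, sub_add_cancel]
  have hmean : ∫ v, f v ∂μ = c := by
    have h0 : ∫ v, (f v - c) ∂μ = 0 := by
      simp_rw [hcentered, integral_integral_mul_kernel_swap hφ he hC,
        integral_centeredIndicatorIoi, mul_zero, integral_zero]
    rwa [integral_sub (hf.continuous.integrable_of_hasCompactSupport hsupp) (integrable_const c),
      integral_const, probReal_univ, one_smul, sub_eq_zero] at h0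
  have hvar := variance_eq_sub (hf.continuous.memLp_of_hasCompactSupport hsupp (μ := μ) (p := 2))
  rw [variance_eq_integral hf.continuous.aemeasurable] at hvar
  simp only [Pi.pow_apply] at hvar
  rw [← hvar, hmean]
  simp_rw [hcentered, integral_sq_integral_mul_kernel hφ he hC, integral_centeredIndicatorIoi_mul]

theorem variance_eq_double_integral_of_cdf_general (z : ℝ) (f : ℝ → ℝ)
    (hf : ContDiff ℝ 1 f) (hsupp : HasCompactSupport f) :
    (∫ x, (f x) ^ 2 ∂(gaussianReal 0 (z ^ 2).toNNReal))
        - (∫ x, f x ∂(gaussianReal 0 (z ^ 2).toNNReal)) ^ 2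
      = ∫ x : ℝ, ∫ y : ℝ,
          deriv f x * deriv f y *
            (gaussCDF z (min x y) - gaussCDF z x * gaussCDF z y) := by
  have hcdf : gaussCDF z = cdf (gaussianReal 0 (z ^ 2).toNNReal) := by
    ext x
    rw [cdf_eq_real]
    rfl
  rw [hcdf]
  exact integral_sq_sub_sq_integral_eq_integral_integral_deriv_mul_cdf _ hf hsupp

theorem variance_eq_double_integral_of_cdf (z : ℝ) (hz : z ≠ 0) (f : ℝ → ℝ)
    (hf : ContDiff ℝ 1 f) (hsupp : HasCompactSupport f) :
    (∫ x, (f x) ^ 2 ∂(gaussianReal 0 (z ^ 2).toNNReal))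
        - (∫ x, f x ∂(gaussianReal 0 (z ^ 2).toNNReal)) ^ 2
      = ∫ x : ℝ, ∫ y : ℝ,
          deriv f x * deriv f y *
            (gaussCDF z (min x y) - gaussCDF z x * gaussCDF z y) :=
  variance_eq_double_integral_of_cdf_general z f hf hsupp
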